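/- (Additive representation of the unified skew-normal, equation (6) of the paper.) Let s, p ≥ 1, ξ ∈ ℝ^p, Ω ∈ ℝ^{p×p} symmetric positive definite with Ω = D_Ω Ω̄ D_Ω, Δ ∈ ℝ^{p×s}, γ ∈ ℝ^s, Γ ∈ ℝ^{s×s} symmetric positive definite, and assume M := [[Γ, Δᵀ],[Δ, Ω̄]] is positive definite. Let r₀ and r₁ be independent random vectors with densities φ_p(·; Ω̄ − Δ Γ⁻¹ Δᵀ) and φ_s(·; Γ) respectively. Then the conditional law of z := ξ + D_Ω (r₀ + Δ Γ⁻¹ r₁) given the event {r₁ + γ > 0 componentwise} has density sun_{p,s}(·; ξ, Ω, Δ, γ, Γ); equivalently, for every bounded measurable g : ℝ^p → ℝ, E[g(ξ + D_Ω(r₀ + Δ Γ⁻¹ r₁)) · 1{r₁ + γ > 0}] / P(r₁ + γ > 0) = ∫_{ℝ^p} g(z) · sun_{p,s}(z; ξ, Ω, Δ, γ, Γ) dz. -/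

import Mathlib

open MeasureTheory Matrix

/-- Centered multivariate normal density `φ(z; S)` with covariance `S`. -/
noncomputable def gaussPdf {ι : Type*} [Fintype ι] [DecidableEq ι]
    (S : Matrix ι ι ℝ) (z : ι → ℝ) : ℝ :=
  (2 * Real.pi) ^ (-(Fintype.card ι : ℝ) / 2) * S.det ^ (-(1 : ℝ) / 2) *
    Real.exp (-(1 / 2) * (z ⬝ᵥ (S⁻¹ *ᵥ z)))

/-- Centered multivariate normal CDF `Φ(a; S)` with covariance `S`. -/
noncomputable def gaussCdf {ι : Type*} [Fintype ι] [DecidableEq ι]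
    (S : Matrix ι ι ℝ) (a : ι → ℝ) : ℝ :=
  ∫ u in {u : ι → ℝ | ∀ i, u i ≤ a i}, gaussPdf S u

/-- `D_K`: diagonal matrix with entries `√(K i i)`. -/
noncomputable def dMat {ι : Type*} [Fintype ι] [DecidableEq ι]
    (K : Matrix ι ι ℝ) : Matrix ι ι ℝ :=
  Matrix.diagonal fun i => Real.sqrt (K i i)

/-- `K̄ := D_K⁻¹ K D_K⁻¹`: the correlation matrix associated with `K`. -/
noncomputable def corrMat {ι : Type*} [Fintype ι] [DecidableEq ι]
    (K : Matrix ι ι ℝ) : Matrix ι ι ℝ :=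
  (dMat K)⁻¹ * K * (dMat K)⁻¹

/-- The unified skew-normal density `sun(z; ξ, Ω, Δ, γ, Γ)`. -/
noncomputable def sunPdf {ι κ : Type*} [Fintype ι] [DecidableEq ι] [Fintype κ] [DecidableEq κ]
    (xi : ι → ℝ) (Om : Matrix ι ι ℝ) (De : Matrix ι κ ℝ) (ga : κ → ℝ) (Ga : Matrix κ κ ℝ)
    (z : ι → ℝ) : ℝ :=
  gaussPdf Om (z - xi) *
    gaussCdf (Ga - Deᵀ * (corrMat Om)⁻¹ * De)
      (ga + (Deᵀ * (corrMat Om)⁻¹ * (dMat Om)⁻¹) *ᵥ (z - xi)) /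
    gaussCdf Ga ga

/-!
Put `D = D_Ω` and `x = D⁻¹ (z - ξ)`. Substituting `z = ξ + D (r₀ + ΔΓ⁻¹ r₁)` for `r₀` and
exchanging the integrals, the numerator becomes
`∫ g(z) |det D|⁻¹ ∫_{r₁ + γ > 0} φ(x - ΔΓ⁻¹ r₁; Ω̄ - ΔΓ⁻¹Δᵀ) φ(r₁; Γ) dr₁ dz`.
The inner integrand is the joint density `φ((r₁, x); M)`, and the block LDLᵀ factorisation of
`M` through its other diagonal block rewrites it as `φ(r₁ - ΔᵀΩ̄⁻¹ x; Γ - ΔᵀΩ̄⁻¹Δ) φ(x; Ω̄)`.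
Since `φ` is even, the integral over the shifted orthant `r₁ + γ > 0` is the Gaussian CDF in the
SUN density, and `|det D|⁻¹ φ(x; Ω̄) = φ(z - ξ; Ω)`.
-/

lemma Matrix.PosDef.transpose_eq_self {n : Type*} {A : Matrix n n ℝ} (hA : A.PosDef) :
    Aᵀ = A :=
  (conjTranspose_eq_transpose_of_trivial A).symm.trans hA.isHermitian.eq

variable {ι κ : Type*} [Fintype ι] [DecidableEq ι] [Fintype κ]

lemma gaussPdf_neg (S : Matrix ι ι ℝ) (z : ι → ℝ) : gaussPdf S (-z) = gaussPdf S z := by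
  simp only [gaussPdf, mulVec_neg, neg_dotProduct, dotProduct_neg, neg_neg]

lemma continuous_gaussPdf (S : Matrix ι ι ℝ) : Continuous (gaussPdf S) := by
  unfold gaussPdf
  fun_prop

lemma gaussPdf_mul_mul_transpose_mulVec {S : Matrix ι ι ℝ} (hS : 0 < S.det) {B : Matrix ι ι ℝ}
    (hB : IsUnit B.det) (u : ι → ℝ) :
    gaussPdf (B * S * Bᵀ) (B *ᵥ u) = |B.det|⁻¹ * gaussPdf S u := by
  have hdet : (B * S * Bᵀ).det = |B.det| ^ 2 * S.det := by
    rw [det_mul, det_mul, det_transpose, sq_abs]; ring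
  have hquad : B *ᵥ u ⬝ᵥ ((B * S * Bᵀ)⁻¹ *ᵥ (B *ᵥ u)) = u ⬝ᵥ (S⁻¹ *ᵥ u) := by
    have hBu : B⁻¹ *ᵥ (B *ᵥ u) = u := by rw [mulVec_mulVec, nonsing_inv_mul B hB, one_mulVec]
    rw [Matrix.mul_inv_rev, Matrix.mul_inv_rev, ← mulVec_mulVec, ← mulVec_mulVec, hBu,
      ← transpose_nonsing_inv, dotProduct_mulVec, vecMul_transpose, hBu]
  have hscale : (|B.det| ^ 2 * S.det) ^ (-(1 : ℝ) / 2) = |B.det|⁻¹ * S.det ^ (-(1 : ℝ) / 2) := by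
    rw [Real.mul_rpow (by positivity) hS.le, ← Real.rpow_natCast, ← Real.rpow_mul (abs_nonneg _)]
    norm_num [Real.rpow_neg_one]
  rw [gaussPdf, gaussPdf, hdet, hquad, hscale]
  ring

lemma gaussPdf_submatrix_equiv {ι' : Type*} [Fintype ι'] [DecidableEq ι'] (S : Matrix ι ι ℝ)
    (e : ι' ≃ ι) (u : ι → ℝ) :
    gaussPdf (S.submatrix e e) (u ∘ e) = gaussPdf S u := by
  rw [gaussPdf, gaussPdf, det_submatrix_equiv_self, inv_submatrix_equiv, submatrix_mulVec_equiv,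
    Fintype.card_congr e, ← dotProduct_comp_equiv_symm, Function.comp_assoc, e.self_comp_symm,
    Function.comp_id, Function.comp_assoc, e.self_comp_symm, Function.comp_id]

lemma measurableEmbedding_mulVec_add {Q : Matrix ι ι ℝ} (hQ : Q.det ≠ 0) (b : ι → ℝ) :
    MeasurableEmbedding fun x => Q *ᵥ x + b := by
  refine Continuous.measurableEmbedding (by fun_prop) fun x y hxy => ?_
  exact mulVec_injective_of_isUnit ((isUnit_iff_isUnit_det Q).mpr hQ.isUnit) (add_right_cancel hxy)

lemma map_mulVec_add_volume {Q : Matrix ι ι ℝ} (hQ : Q.det ≠ 0) (b : ι → ℝ) :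
    Measure.map (fun x => Q *ᵥ x + b) volume = ENNReal.ofReal |Q.det|⁻¹ • volume := by
  have h : (fun x : ι → ℝ => Q *ᵥ x + b) = (· + b) ∘ Matrix.toLin' Q := rfl
  rw [h, ← Measure.map_map (measurable_add_const b) (LinearMap.continuous_on_pi _).measurable,
    Real.map_matrix_volume_pi_eq_smul_volume_pi hQ, Measure.map_smul,
    map_add_right_eq_self volume b, abs_inv]

lemma integral_comp_mulVec_add {Q : Matrix ι ι ℝ} (hQ : Q.det ≠ 0) (f : (ι → ℝ) → ℝ)
    (b : ι → ℝ) : ∫ x, f (Q *ᵥ x + b) = |Q.det|⁻¹ * ∫ x, f x := by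
  rw [← (measurableEmbedding_mulVec_add hQ b).integral_map, map_mulVec_add_volume hQ b,
    integral_smul_measure, ENNReal.toReal_ofReal (by positivity), smul_eq_mul]

lemma MeasureTheory.Integrable.comp_mulVec_add {f : (ι → ℝ) → ℝ} (hf : Integrable f)
    {Q : Matrix ι ι ℝ} (hQ : Q.det ≠ 0) (b : ι → ℝ) : Integrable fun x => f (Q *ᵥ x + b) := by
  refine (measurableEmbedding_mulVec_add hQ b).integrable_map_iff.mp ?_
  rw [map_mulVec_add_volume hQ b]
  exact hf.smul_measure ENNReal.ofReal_ne_top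

lemma integrable_gaussPdf {S : Matrix ι ι ℝ} (hS : S.PosDef) : Integrable (gaussPdf S) := by
  -- `S⁻¹ = Tᴴ T`, so `gaussPdf S z` is a product of one-dimensional Gaussians in `T z`.
  open scoped MatrixOrder in
  obtain ⟨T, hT⟩ := CStarAlgebra.nonneg_iff_eq_star_mul_self.mp hS.inv.posSemidef.nonneg
  have hTdet : T.det ≠ 0 := fun h0 => hS.inv.det_pos.ne' (by
    rw [hT, star_eq_conjTranspose, det_mul, h0, mul_zero])
  have hF : Integrable fun u : ι → ℝ => ∏ i, Real.exp (-(1 / 2) * u i ^ 2) :=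
    Integrable.fintype_prod fun _ => integrable_exp_neg_mul_sq (by norm_num)
  refine ((hF.comp_mulVec_add hTdet 0).const_mul
    ((2 * Real.pi) ^ (-(Fintype.card ι : ℝ) / 2) * S.det ^ (-(1 : ℝ) / 2))).congr
    (Filter.Eventually.of_forall fun z => ?_)
  have hquad : z ⬝ᵥ (S⁻¹ *ᵥ z) = ∑ i, (T *ᵥ z) i ^ 2 := by
    rw [hT, star_eq_conjTranspose, conjTranspose_eq_transpose_of_trivial, ← mulVec_mulVec,
      dotProduct_mulVec, vecMul_transpose]
    simp only [dotProduct, sq]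
  simp only [gaussPdf, add_zero, hquad, Finset.mul_sum, Real.exp_sum]

lemma setIntegral_gaussPdf_sub_orthant (S : Matrix ι ι ℝ) (a m : ι → ℝ) :
    ∫ y in {y : ι → ℝ | ∀ i, 0 < y i + a i}, gaussPdf S (y - m) = gaussCdf S (a + m) := by
  have hpre : {y : ι → ℝ | ∀ i, 0 < y i + a i} =
      (m - ·) ⁻¹' Set.univ.pi fun i => Set.Iio ((a + m) i) := by
    ext y
    simp only [Set.mem_ofPred_eq, Set.mem_preimage, Set.mem_univ_pi, Set.mem_Iio, Pi.sub_apply,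
      Pi.add_apply]
    exact forall_congr' fun i => by constructor <;> intro h <;> linarith
  calc ∫ y in {y : ι → ℝ | ∀ i, 0 < y i + a i}, gaussPdf S (y - m)
      = ∫ y in (m - ·) ⁻¹' Set.univ.pi fun i => Set.Iio ((a + m) i), gaussPdf S (m - y) := by
        simp_rw [hpre, ← neg_sub m, gaussPdf_neg]
    _ = ∫ u in Set.univ.pi fun i => Set.Iio ((a + m) i), gaussPdf S u :=
        (volume.measurePreserving_sub_left m).setIntegral_preimage_emb
          (MeasurableEquiv.subLeft m).measurableEmbedding _ _
    _ = gaussCdf S (a + m) := setIntegral_congr_set Measure.univ_pi_Iio_ae_eq_Iic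

section Fubini

variable {μ : Measure (κ → ℝ)} {f : (ι → ℝ) → ℝ} {h : (κ → ℝ) → ℝ}

lemma integrable_prod_comp_mulVec_sub (hfm : Measurable f) (hf : Integrable f)
    (hh : Integrable h μ) {Q : Matrix ι ι ℝ} (hQ : Q.det ≠ 0) (b : ι → ℝ) (A : Matrix ι κ ℝ) :
    Integrable (fun q : (κ → ℝ) × (ι → ℝ) => f (Q *ᵥ (q.2 - b) - A *ᵥ q.1) * h q.1)
      (μ.prod volume) := by
  have haff : ∀ y z, Q *ᵥ (z - b) - A *ᵥ y = Q *ᵥ z + -(Q *ᵥ b + A *ᵥ y) := fun y z => by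
    rw [mulVec_sub]; abel
  have hnorm : ∀ y, ∫ z, ‖f (Q *ᵥ (z - b) - A *ᵥ y) * h y‖ = (|Q.det|⁻¹ * ∫ u, ‖f u‖) * ‖h y‖ :=
    fun y => by
      simp only [norm_mul, haff, integral_mul_const,
        integral_comp_mulVec_add hQ (fun u => ‖f u‖)]
  refine (integrable_prod_iff ?_).mpr ⟨Filter.Eventually.of_forall fun y => ?_, ?_⟩
  · exact ((hfm.comp (by fun_prop)).aestronglyMeasurable).mul hh.aestronglyMeasurable.comp_fst
  · simp only [haff]
    exact (hf.comp_mulVec_add hQ _).mul_const _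
  · simp only [hnorm]
    exact hh.norm.const_mul _

lemma integral_integral_comp_affine_swap [SFinite μ] (hfm : Measurable f) (hf : Integrable f)
    (hh : Integrable h μ) {g : (ι → ℝ) → ℝ} (hgm : Measurable g) {C : ℝ}
    (hgC : ∀ z, |g z| ≤ C) {T : Matrix ι ι ℝ} (hT : T.det ≠ 0) (A : Matrix ι κ ℝ)
    (b : ι → ℝ) :
    ∫ y, (∫ r, g (b + T *ᵥ (r + A *ᵥ y)) * f r * h y) ∂μ =
      |T.det|⁻¹ * ∫ z, g z * ∫ y, f (T⁻¹ *ᵥ (z - b) - A *ᵥ y) * h y ∂μ := by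
  have hTu : IsUnit T.det := hT.isUnit
  have hinner : ∀ y, ∫ r, g (b + T *ᵥ (r + A *ᵥ y)) * f r * h y =
      |T.det|⁻¹ * ∫ z, g z * (f (T⁻¹ *ᵥ (z - b) - A *ᵥ y) * h y) := fun y => by
    rw [← integral_comp_mulVec_add hT _ (b + T *ᵥ (A *ᵥ y))]
    refine integral_congr_ae (Filter.Eventually.of_forall fun r => ?_)
    have hz : T *ᵥ r + (b + T *ᵥ (A *ᵥ y)) = b + T *ᵥ (r + A *ᵥ y) := by
      rw [mulVec_add]; abel
    have hr : T⁻¹ *ᵥ (b + T *ᵥ (r + A *ᵥ y) - b) - A *ᵥ y = r := by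
      rw [add_sub_cancel_left, mulVec_mulVec, nonsing_inv_mul T hTu, one_mulVec,
        add_sub_cancel_right]
    simp only [hz, hr, mul_assoc]
  have hint : Integrable (Function.uncurry fun y z =>
      g z * (f (T⁻¹ *ᵥ (z - b) - A *ᵥ y) * h y)) (μ.prod volume) :=
    (integrable_prod_comp_mulVec_sub hfm hf hh (isUnit_nonsing_inv_det T hTu).ne_zero b A).bdd_mul
      (hgm.comp measurable_snd).aestronglyMeasurable (Filter.Eventually.of_forall fun q => hgC q.2)
  simp only [hinner, integral_const_mul, integral_integral_swap hint]

end Fubini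

variable [DecidableEq κ]

lemma gaussPdf_fromBlocks_zero {P : Matrix κ κ ℝ} {Q : Matrix ι ι ℝ} (hP : 0 < P.det)
    (hQ : 0 < Q.det) (u : κ → ℝ) (v : ι → ℝ) :
    gaussPdf (fromBlocks P 0 0 Q) (Sum.elim u v) = gaussPdf P u * gaussPdf Q v := by
  have hinv : (fromBlocks P 0 0 Q)⁻¹ = fromBlocks P⁻¹ 0 0 Q⁻¹ := by
    rw [inv_fromBlocks_zero₂₁_of_isUnit_iff]
    · simp
    · simp [isUnit_iff_isUnit_det, hP.ne', hQ.ne']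
  have hcard : (Fintype.card (κ ⊕ ι) : ℝ) = Fintype.card κ + Fintype.card ι := by
    rw [Fintype.card_sum, Nat.cast_add]
  rw [gaussPdf, gaussPdf, gaussPdf, det_fromBlocks_zero₂₁, hinv, fromBlocks_mulVec, hcard,
    Real.mul_rpow hP.le hQ.le, neg_add, add_div, Real.rpow_add (by positivity)]
  simp only [Sum.elim_comp_inl, Sum.elim_comp_inr, zero_mulVec, add_zero, zero_add,
    sumElim_dotProduct_sumElim, mul_add, Real.exp_add]
  ring

lemma gaussPdf_fromBlocks_eq_mul₁₁ {A : Matrix κ κ ℝ} {B : Matrix ι κ ℝ} {D : Matrix ι ι ℝ}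
    (hA : A.PosDef) (hK : 0 < (D - B * A⁻¹ * Bᵀ).det) (y : κ → ℝ) (x : ι → ℝ) :
    gaussPdf (fromBlocks A Bᵀ B D) (Sum.elim y x) =
      gaussPdf (D - B * A⁻¹ * Bᵀ) (x - (B * A⁻¹) *ᵥ y) * gaussPdf A y := by
  have := A.invertibleOfIsUnitDet hA.det_pos.ne'.isUnit
  set L : Matrix (κ ⊕ ι) (κ ⊕ ι) ℝ := fromBlocks 1 0 (B * A⁻¹) 1
  have hLdet : L.det = 1 := by simp [L]
  have hM : fromBlocks A Bᵀ B D = L * fromBlocks A 0 0 (D - B * A⁻¹ * Bᵀ) * Lᵀ := by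
    rw [fromBlocks_eq_of_invertible₁₁ A Bᵀ B D, invOf_eq_nonsing_inv]
    simp [L, fromBlocks_transpose, transpose_nonsing_inv, hA.transpose_eq_self]
  have hv : Sum.elim y x = L *ᵥ Sum.elim y (x - (B * A⁻¹) *ᵥ y) := by
    simp [L, fromBlocks_mulVec]
  have hdet : 0 < (fromBlocks A 0 0 (D - B * A⁻¹ * Bᵀ)).det := by
    rw [det_fromBlocks_zero₂₁]
    exact mul_pos hA.det_pos hK
  rw [hM, hv, gaussPdf_mul_mul_transpose_mulVec hdet (by simp [hLdet]), hLdet,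
    gaussPdf_fromBlocks_zero hA.det_pos hK, abs_one, inv_one, one_mul, mul_comm]

lemma gaussPdf_fromBlocks_eq_mul₂₂ {A : Matrix κ κ ℝ} {B : Matrix ι κ ℝ} {D : Matrix ι ι ℝ}
    (hD : D.PosDef) (hC : 0 < (A - Bᵀ * D⁻¹ * B).det) (y : κ → ℝ) (x : ι → ℝ) :
    gaussPdf (fromBlocks A Bᵀ B D) (Sum.elim y x) =
      gaussPdf (A - Bᵀ * D⁻¹ * B) (y - (Bᵀ * D⁻¹) *ᵥ x) * gaussPdf D x := by
  have h := gaussPdf_fromBlocks_eq_mul₁₁ (B := Bᵀ) hD (by rwa [transpose_transpose]) x y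
  rw [transpose_transpose, ← gaussPdf_submatrix_equiv _ (Equiv.sumComm κ ι)] at h
  rw [← h, ← fromBlocks_submatrix_sum_swap_sum_swap]
  congr 1
  funext i
  cases i <;> rfl

lemma Matrix.PosDef.schur_complement₁₁ {A : Matrix κ κ ℝ} {B : Matrix ι κ ℝ} {D : Matrix ι ι ℝ}
    (hM : (fromBlocks A Bᵀ B D).PosDef) (hA : A.PosDef) : (D - B * A⁻¹ * Bᵀ).PosDef := by
  have := A.invertibleOfIsUnitDet hA.det_pos.ne'.isUnit
  have hB : (Bᵀ)ᴴ = B := by rw [conjTranspose_eq_transpose_of_trivial, transpose_transpose]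
  have hsemi := (PosDef.fromBlocks₁₁ Bᵀ D hA).mp (hB ▸ hM.posSemidef)
  rw [hB] at hsemi
  refine hsemi.posDef_iff_det_ne_zero.mpr fun h0 => hM.det_pos.ne' ?_
  rw [det_fromBlocks₁₁, invOf_eq_nonsing_inv, h0, mul_zero]

lemma Matrix.PosDef.schur_complement₂₂ {A : Matrix κ κ ℝ} {B : Matrix ι κ ℝ} {D : Matrix ι ι ℝ}
    (hM : (fromBlocks A Bᵀ B D).PosDef) (hD : D.PosDef) : (A - Bᵀ * D⁻¹ * B).PosDef := by
  have := D.invertibleOfIsUnitDet hD.det_pos.ne'.isUnit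
  have hB : (Bᵀ)ᴴ = B := by rw [conjTranspose_eq_transpose_of_trivial, transpose_transpose]
  have hsemi := (PosDef.fromBlocks₂₂ A Bᵀ hD).mp (hB ▸ hM.posSemidef)
  rw [hB] at hsemi
  refine hsemi.posDef_iff_det_ne_zero.mpr fun h0 => hM.det_pos.ne' ?_
  rw [det_fromBlocks₂₂, invOf_eq_nonsing_inv, h0, mul_zero]

lemma setIntegral_gaussPdf_cond_mul {A : Matrix κ κ ℝ} {B : Matrix ι κ ℝ} {D : Matrix ι ι ℝ}
    (hM : (fromBlocks A Bᵀ B D).PosDef) (hA : A.PosDef) (hD : D.PosDef) (a : κ → ℝ)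
    (x : ι → ℝ) :
    ∫ y in {y : κ → ℝ | ∀ i, 0 < y i + a i},
        gaussPdf (D - B * A⁻¹ * Bᵀ) (x - (B * A⁻¹) *ᵥ y) * gaussPdf A y =
      gaussPdf D x * gaussCdf (A - Bᵀ * D⁻¹ * B) (a + (Bᵀ * D⁻¹) *ᵥ x) := by
  simp_rw [← gaussPdf_fromBlocks_eq_mul₁₁ hA (hM.schur_complement₁₁ hA).det_pos,
    gaussPdf_fromBlocks_eq_mul₂₂ hD (hM.schur_complement₂₂ hD).det_pos]
  rw [integral_mul_const, setIntegral_gaussPdf_sub_orthant, mul_comm]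

lemma dMat_det_pos {K : Matrix ι ι ℝ} (hK : ∀ i, 0 < K i i) : 0 < (dMat K).det := by
  rw [dMat, det_diagonal]
  exact Finset.prod_pos fun i _ => Real.sqrt_pos.mpr (hK i)

lemma dMat_transpose (K : Matrix ι ι ℝ) : (dMat K)ᵀ = dMat K :=
  diagonal_transpose _

lemma dMat_mul_corrMat_mul_dMat {K : Matrix ι ι ℝ} (hK : ∀ i, 0 < K i i) :
    dMat K * corrMat K * dMat K = K := by
  have hD : IsUnit (dMat K).det := (dMat_det_pos hK).ne'.isUnit
  rw [corrMat, ← Matrix.mul_assoc, ← Matrix.mul_assoc, mul_nonsing_inv _ hD, Matrix.one_mul,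
    Matrix.mul_assoc, nonsing_inv_mul _ hD, Matrix.mul_one]

lemma Matrix.PosDef.corrMat {K : Matrix ι ι ℝ} (hK : K.PosDef) : (corrMat K).PosDef := by
  have hD : IsUnit (dMat K)⁻¹ := (isUnit_iff_isUnit_det _).mpr
    (isUnit_nonsing_inv_det _ (dMat_det_pos fun _ => hK.diag_pos).ne'.isUnit)
  have h := hK.conjTranspose_mul_mul_same (mulVec_injective_of_isUnit hD)
  rwa [conjTranspose_eq_transpose_of_trivial, transpose_nonsing_inv, dMat_transpose] at h

lemma gaussPdf_dMat_mulVec {K : Matrix ι ι ℝ} (hK : K.PosDef) (x : ι → ℝ) :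
    gaussPdf K (dMat K *ᵥ x) = |(dMat K).det|⁻¹ * gaussPdf (corrMat K) x := by
  have hdiag : ∀ i, 0 < K i i := fun _ => hK.diag_pos
  have h := gaussPdf_mul_mul_transpose_mulVec hK.corrMat.det_pos
    (dMat_det_pos hdiag).ne'.isUnit x
  rwa [dMat_transpose, dMat_mul_corrMat_mul_dMat hdiag] at h

theorem sun_additive_representation_general
    {s p : ℕ}
    (xi : Fin p → ℝ) (Om : Matrix (Fin p) (Fin p) ℝ) (hOm : Om.PosDef)
    (De : Matrix (Fin p) (Fin s) ℝ) (ga : Fin s → ℝ)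
    (Ga : Matrix (Fin s) (Fin s) ℝ) (hGa : Ga.PosDef)
    (hM : (Matrix.fromBlocks Ga Deᵀ De (corrMat Om)).PosDef)
    (g : (Fin p → ℝ) → ℝ) (hgm : Measurable g) (hgb : ∃ Cb, ∀ x, |g x| ≤ Cb) :
    (∫ r1 in {r1 : Fin s → ℝ | ∀ i, r1 i + ga i > 0},
        ∫ r0 : Fin p → ℝ,
          g (xi + dMat Om *ᵥ (r0 + (De * Ga⁻¹) *ᵥ r1)) *
            gaussPdf (corrMat Om - De * Ga⁻¹ * Deᵀ) r0 * gaussPdf Ga r1) /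
      (∫ r1 in {r1 : Fin s → ℝ | ∀ i, r1 i + ga i > 0}, gaussPdf Ga r1) =
    ∫ z : Fin p → ℝ, g z * sunPdf xi Om De ga Ga z := by
  obtain ⟨C, hgC⟩ := hgb
  have hD : (dMat Om).det ≠ 0 := (dMat_det_pos fun _ => hOm.diag_pos).ne'
  have hK := hM.schur_complement₁₁ hGa
  have hE : {r1 : Fin s → ℝ | ∀ i, r1 i + ga i > 0} = {r1 | ∀ i, 0 < r1 i + ga i} := rfl
  have hden : ∫ r1 in {r1 : Fin s → ℝ | ∀ i, 0 < r1 i + ga i}, gaussPdf Ga r1 = gaussCdf Ga ga := by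
    simpa using setIntegral_gaussPdf_sub_orthant Ga ga 0
  rw [hE, integral_integral_comp_affine_swap (continuous_gaussPdf _).measurable
    (integrable_gaussPdf hK) (integrable_gaussPdf hGa).restrict hgm hgC hD, hden,
    ← integral_const_mul, ← integral_div]
  congr 1
  funext z
  have hOmPdf : gaussPdf Om (z - xi) =
      |(dMat Om).det|⁻¹ * gaussPdf (corrMat Om) ((dMat Om)⁻¹ *ᵥ (z - xi)) := by
    rw [← gaussPdf_dMat_mulVec hOm, mulVec_mulVec, mul_nonsing_inv _ hD.isUnit, one_mulVec]
  rw [setIntegral_gaussPdf_cond_mul hM hGa hOm.corrMat, sunPdf, hOmPdf, mulVec_mulVec]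
  ring

/-- Additive representation of the unified skew-normal (equation (6)): the conditional law
of `ξ + D_Ω (r₀ + Δ Γ⁻¹ r₁)` given `{r₁ + γ > 0}` has the SUN density, stated via
expectations of bounded measurable test functions against the joint density of the
independent vectors `r₀ ~ φ_p(·; Ω̄ − Δ Γ⁻¹ Δᵀ)` and `r₁ ~ φ_s(·; Γ)`. -/
theorem sun_additive_representation
    {s p : ℕ} (hs : 0 < s) (hp : 0 < p)
    (xi : Fin p → ℝ) (Om : Matrix (Fin p) (Fin p) ℝ) (hOm : Om.PosDef)
    (De : Matrix (Fin p) (Fin s) ℝ) (ga : Fin s → ℝ)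
    (Ga : Matrix (Fin s) (Fin s) ℝ) (hGa : Ga.PosDef)
    (hM : (Matrix.fromBlocks Ga Deᵀ De (corrMat Om)).PosDef)
    (g : (Fin p → ℝ) → ℝ) (hgm : Measurable g) (hgb : ∃ Cb, ∀ x, |g x| ≤ Cb) :
    (∫ r1 in {r1 : Fin s → ℝ | ∀ i, r1 i + ga i > 0},
        ∫ r0 : Fin p → ℝ,
          g (xi + dMat Om *ᵥ (r0 + (De * Ga⁻¹) *ᵥ r1)) *
            gaussPdf (corrMat Om - De * Ga⁻¹ * Deᵀ) r0 * gaussPdf Ga r1) /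
      (∫ r1 in {r1 : Fin s → ℝ | ∀ i, r1 i + ga i > 0}, gaussPdf Ga r1) =
    ∫ z : Fin p → ℝ, g z * sunPdf xi Om De ga Ga z :=
  sun_additive_representation_general xi Om hOm De ga Ga hGa hM g hgm hgb
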